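/- In a regular vine on d elements, the total number of edges over all trees is d(d-1)/2, and each edge corresponds to a distinct unordered pair {a_e, b_e} of elements of V_1; hence the map e ↦ {a_e, b_e} from the set of all edges of the vine to unordered pairs of V_1 is a bijection. -/

import Mathlib

open Finset

variable {α : Type*} [DecidableEq α] [Fintype α]

/-- The simple graph on `α` induced by a finite set of unordered pairs. -/
def graphOf (E : Finset (Sym2 α)) : SimpleGraph α where
  Adj x y := x ≠ y ∧ s(x, y) ∈ E
  symm := by
    constructor
    intro x y h
    refine ⟨h.1.symm, ?_⟩
    rw [Sym2.eq_swap]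
    exact h.2
  loopless := ⟨fun x h => h.1 rfl⟩

/-- `(V, E)` is a finite tree: edges join distinct vertices of `V`, the induced
graph is acyclic, and all vertices of `V` are mutually reachable. -/
def IsTreeOn (V : Finset α) (E : Finset (Sym2 α)) : Prop :=
  (∀ e ∈ E, ∀ x ∈ e, x ∈ V) ∧ (∀ e ∈ E, ¬ e.IsDiag) ∧
    (graphOf E).IsAcyclic ∧ ∀ x ∈ V, ∀ y ∈ V, (graphOf E).Reachable x y

/-- Complete union of an edge: the union of the complete unions of its endpoints
(each vertex of a tree of the vine is identified with its complete union). -/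
def eUnion (e : Sym2 (Finset α)) : Finset α :=
  Sym2.lift ⟨fun A B => A ∪ B, fun A B => union_comm A B⟩ e

/-- Conditioning set `D_e` of an edge. -/
def condSet (e : Sym2 (Finset α)) : Finset α :=
  Sym2.lift ⟨fun A B => A ∩ B, fun A B => inter_comm A B⟩ e

/-- Conditioned set `{a_e, b_e}` of an edge. -/
def condPair (e : Sym2 (Finset α)) : Finset α :=
  Sym2.lift ⟨fun A B => symmDiff A B, fun A B => symmDiff_comm A B⟩ e

/-- A regular vine on a finite set `α` of `d = Fintype.card α` elements.  The
vertices of tree `k` (for `k = 1, …, d-1`) are identified with their complete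
unions, subsets of `α`; `V (k+1) = E k` is expressed via complete unions. -/
structure RegularVine (α : Type*) [DecidableEq α] [Fintype α] where
  V : ℕ → Finset (Finset α)
  E : ℕ → Finset (Sym2 (Finset α))
  hV1 : V 1 = Finset.univ.image (fun a : α => ({a} : Finset α))
  hVsucc : ∀ k, 1 ≤ k → V (k + 1) = (E k).image eUnion
  tree : ∀ k, 1 ≤ k → k + 1 ≤ Fintype.card α → IsTreeOn (V k) (E k)
  hEzero : ∀ k, k = 0 ∨ Fintype.card α ≤ k → E k = ∅
  proximity : ∀ k, 1 ≤ k → ∀ p ∈ E (k + 1),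
    ∃ a ∈ E k, ∃ b ∈ E k, p = s(eUnion a, eUnion b) ∧ ∃ v, v ∈ a ∧ v ∈ b

/-- A tree `(V, E)` is a path: it is a tree and every vertex has degree at most 2. -/
def IsPathOn (V : Finset α) (E : Finset (Sym2 α)) : Prop :=
  IsTreeOn V E ∧ ∀ v ∈ V, (E.filter (fun e => v ∈ e)).card ≤ 2

/-- A permutation `(i_1, …, i_d) = (σ 0, …, σ (d-1))` is compatible with a vine on
`Fin d`: for every `k` there is an edge of tree `k` with conditioned set
`{σ k, σ r}` (some `r < k`) and conditioning set `{σ 0, …, σ (k-1)} \ {σ r}`. -/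
def Compatible {d : ℕ} (𝒱 : RegularVine (Fin d)) (σ : Fin d → Fin d) : Prop :=
  ∀ k : Fin d, 1 ≤ (k : ℕ) → ∃ r : Fin d, r < k ∧ ∃ e ∈ 𝒱.E (k : ℕ),
    condPair e = {σ k, σ r} ∧
    condSet e = ((Finset.univ.filter (fun s : Fin d => s < k)).image σ).erase (σ r)

/-!
Tree `k` of the vine has `k`-sets as nodes, its edges have `(k + 1)`-sets as complete unions, and
for every element `x` the nodes containing `x` span a subtree. The last property passes from tree
`k` to tree `k + 1` because, by proximity, a path of tree `k + 1` lifts to a walk of tree `k`.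
Hence an edge `s(A, B)` has conditioned pair `{x, y}` with `x ∈ A \ B` and `y ∈ B \ A`, and a node
containing both `x` and `y`, or a second edge with `x` on one side and `y` on the other, would give
a path from `A` to `B` avoiding `s(A, B)`. Every node of tree `k` lies inside a node of each later
tree, so conditioned pairs of different trees differ as well. Tree `k` has `d - k` edges, so the
`d(d-1)/2` edges inject into the `d(d-1)/2` pairs, bijectively.
-/

section

variable {β : Type*}

theorem graphOf_mono {E F : Finset (Sym2 β)} (h : E ⊆ F) : graphOf E ≤ graphOf F :=
  fun _ _ hadj => ⟨hadj.1, h hadj.2⟩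

theorem graphOf_reachable_of_mem {E : Finset (Sym2 β)} {e : Sym2 β} (he : e ∈ E) {a b : β}
    (ha : a ∈ e) (hb : b ∈ e) : (graphOf E).Reachable a b := by
  by_cases hab : a = b
  · exact hab ▸ SimpleGraph.Reachable.refl a
  · rw [(Sym2.mem_and_mem_iff hab).1 ⟨ha, hb⟩] at he
    exact SimpleGraph.Adj.reachable ⟨hab, he⟩

theorem graphOf_support_subset {V : Finset β} {E : Finset (Sym2 β)}
    (hVE : ∀ e ∈ E, ∀ x ∈ e, x ∈ V) {u v : β} (p : (graphOf E).Walk u v) (hu : u ∈ V) :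
    ∀ z ∈ p.support, z ∈ V := by
  induction p with
  | nil => simpa using hu
  | cons h q ih =>
    simp only [SimpleGraph.Walk.support_cons, List.mem_cons, forall_eq_or_imp]
    exact ⟨hu, ih (hVE _ h.2 _ (Sym2.mem_mk_right _ _))⟩

theorem IsTreeOn.left_mem {V : Finset β} {E : Finset (Sym2 β)} (h : IsTreeOn V E) {a b : β}
    (he : s(a, b) ∈ E) : a ∈ V :=
  h.1 _ he _ (Sym2.mem_mk_left a b)

theorem IsTreeOn.right_mem {V : Finset β} {E : Finset (Sym2 β)} (h : IsTreeOn V E) {a b : β}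
    (he : s(a, b) ∈ E) : b ∈ V :=
  h.1 _ he _ (Sym2.mem_mk_right a b)

theorem IsTreeOn.card_add_one {V : Finset β} {E : Finset (Sym2 β)} (h : IsTreeOn V E)
    (hV : V.Nonempty) : E.card + 1 = V.card := by
  classical
  have ⟨hVE, hnd, hac, hconn⟩ := h
  obtain ⟨u, hu⟩ := hV
  let G := (graphOf E).induce (V : Set β)
  have htree : G.IsTree := by
    refine ⟨SimpleGraph.induce_connected_of_patches u hu fun {v} hv => ?_, hac.induce _⟩
    obtain ⟨p⟩ := hconn u hu v hv
    exact ⟨{z | z ∈ p.support}, graphOf_support_subset hVE p hu, p.start_mem_support,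
      p.end_mem_support, p.connected_induce_support.preconnected _ _⟩
  have hG : G.edgeFinset.card = E.card := by
    refine card_bij (fun e _ => Sym2.map Subtype.val e) ?_
      (fun _ _ _ _ h => Sym2.map.injective Subtype.val_injective h) ?_
    · rintro ⟨a, b⟩ he
      exact (SimpleGraph.mem_edgeFinset.1 he).2
    · rintro ⟨a, b⟩ he
      have hab : a ≠ b := fun h => hnd _ he (by simp [h])
      exact ⟨s(⟨a, h.left_mem he⟩, ⟨b, h.right_mem he⟩), SimpleGraph.mem_edgeFinset.2 ⟨hab, he⟩,
        rfl⟩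
  rw [← hG, htree.card_edgeFinset]
  simp

theorem IsTreeOn.exists_mem_of_one_lt_card {V : Finset β} {E : Finset (Sym2 β)}
    (h : IsTreeOn V E) (hV : 1 < V.card) {u : β} (hu : u ∈ V) : ∃ e ∈ E, u ∈ e := by
  obtain ⟨w, hw, hne⟩ := exists_mem_ne hV u
  obtain ⟨p⟩ := h.2.2.2 u hu w hw
  cases p with
  | nil => exact absurd rfl hne
  | cons hadj _ => exact ⟨_, hadj.2, Sym2.mem_mk_left _ _⟩

theorem not_reachable_erase_of_isAcyclic [DecidableEq β] {E : Finset (Sym2 β)}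
    (hac : (graphOf E).IsAcyclic) {a b : β} (hab : a ≠ b) (he : s(a, b) ∈ E) :
    ¬ (graphOf (E.erase s(a, b))).Reachable a b := by
  have hbridge := SimpleGraph.isAcyclic_iff_forall_isBridge.1 hac
    ((graphOf E).mem_edgeSet.2 ⟨hab, he⟩)
  rw [SimpleGraph.isBridge_iff] at hbridge
  refine fun hr => hbridge (hr.mono fun x y (hadj : (graphOf _).Adj x y) => ?_)
  obtain ⟨hne, hmem⟩ := mem_erase.1 hadj.2
  exact SimpleGraph.deleteEdges_adj.2 ⟨⟨hadj.1, hmem⟩, hne⟩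

theorem existsUnique_of_injOn_of_card_le {ι κ : Type*} {s : Finset ι} {t : Finset κ} {f : ι → κ}
    (hf : Set.MapsTo f s t) (hinj : Set.InjOn f s) (hcard : t.card ≤ s.card) {b : κ}
    (hb : b ∈ t) : ∃! a, a ∈ s ∧ f a = b := by
  obtain ⟨a, ha, rfl⟩ := surj_on_of_inj_on_of_card_le (fun a _ => f a) (fun a ha => hf ha)
    (fun _ _ ha₁ ha₂ h => hinj ha₁ ha₂ h) hcard b hb
  exact ⟨a, ⟨ha, rfl⟩, fun a' ha' => hinj ha'.1 ha ha'.2⟩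

theorem sum_Icc_one_sub (n : ℕ) : ∑ k ∈ Icc 1 (n - 1), (n - k) = n * (n - 1) / 2 := by
  rw [← sum_range_id, ← Ico_add_one_right_eq_Icc]
  rcases n with _ | n
  · simp
  · rw [Nat.add_sub_cancel, sum_Ico_reflect (fun j => j) 1 (Nat.le_succ _),
      range_eq_Ico, sum_eq_sum_Ico_succ_bot n.succ_pos]
    simp

end

section

variable {β : Type*} [DecidableEq β]

theorem exists_sdiff_eq_singleton {A B : Finset β} (hAB : (A ∪ B).card = B.card + 1) :
    ∃ x, A \ B = {x} :=
  card_eq_one.1 (by have := card_sdiff_add_card A B; omega)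

theorem card_union_eq_card_add_two {s A B : Finset β} (hsA : s ⊆ A) (hsB : s ⊆ B)
    (hA : A.card = s.card + 1) (hB : B.card = s.card + 1) (hAB : A ≠ B) :
    (A ∪ B).card = s.card + 2 := by
  have hinter : (A ∩ B).card = s.card := by
    refine le_antisymm ?_ (card_le_card (subset_inter hsA hsB))
    by_contra! hlt
    have hA' : A ∩ B = A := eq_of_subset_of_card_le inter_subset_left (by omega)
    have hB' : A ∩ B = B := eq_of_subset_of_card_le inter_subset_right (by omega)
    exact hAB (hA'.symm.trans hB')
  have := card_union_add_card_inter A B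
  omega

@[simp] theorem eUnion_mk (A B : Finset β) : eUnion s(A, B) = A ∪ B := rfl

theorem subset_eUnion_of_mem {t : Finset β} {e : Sym2 (Finset β)} (h : t ∈ e) :
    t ⊆ eUnion e := by
  obtain ⟨t', rfl⟩ := Sym2.mem_iff_exists.1 h
  exact subset_union_left

theorem exists_mem_of_mem_eUnion {x : β} {e : Sym2 (Finset β)} (hx : x ∈ eUnion e) :
    ∃ t ∈ e, x ∈ t := by
  induction e with
  | _ A B =>
    rcases mem_union.1 hx with h | h
    · exact ⟨A, Sym2.mem_mk_left _ _, h⟩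
    · exact ⟨B, Sym2.mem_mk_right _ _, h⟩

def Proximity (E E' : Finset (Sym2 (Finset β))) : Prop :=
  ∀ p ∈ E', ∃ a ∈ E, ∃ b ∈ E, p = s(eUnion a, eUnion b) ∧ ∃ v, v ∈ a ∧ v ∈ b

def RunningIntersection (V : Finset (Finset β)) (E : Finset (Sym2 (Finset β))) : Prop :=
  ∀ x, ∀ v ∈ V, ∀ w ∈ V, x ∈ v → x ∈ w →
    (graphOf (E.filter fun e => x ∈ condSet e)).Reachable v w

namespace Proximity

variable {E E' : Finset (Sym2 (Finset β))}

theorem exists_eUnion_eq_of_mem (h : Proximity E E') {u w : Finset β} (huw : s(u, w) ∈ E') :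
    ∃ a ∈ E, ∃ b ∈ E, eUnion a = u ∧ eUnion b = w ∧ ∃ t, t ∈ a ∧ t ∈ b := by
  obtain ⟨a, ha, b, hb, hab, t, hta, htb⟩ := h _ huw
  rcases Sym2.eq_iff.1 hab with ⟨rfl, rfl⟩ | ⟨rfl, rfl⟩
  · exact ⟨a, ha, b, hb, rfl, rfl, t, hta, htb⟩
  · exact ⟨b, hb, a, ha, rfl, rfl, t, htb, hta⟩

/-- Consecutive nodes of a walk in the next tree are complete unions of edges sharing a node, so
the walk lifts to a walk of the current tree that does not use the edge `c` it avoids. -/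
theorem reachable_erase_of_walk (h : Proximity E E')
    (hinj : Set.InjOn eUnion (E : Set (Sym2 (Finset β)))) {c : Sym2 (Finset β)} {u w : Finset β}
    (q : (graphOf E').Walk u w) (hc : eUnion c ∉ q.support) {a b : Sym2 (Finset β)}
    (ha : a ∈ E) (hau : eUnion a = u) (hb : b ∈ E) (hbw : eUnion b = w) {t t' : Finset β}
    (ht : t ∈ a) (ht' : t' ∈ b) : (graphOf (E.erase c)).Reachable t t' := by
  have hac : a ≠ c := by
    rintro rfl
    exact hc (hau ▸ q.start_mem_support)
  induction q generalizing a t with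
  | nil =>
    obtain rfl : a = b := hinj ha hb (hau.trans hbw.symm)
    exact graphOf_reachable_of_mem (mem_erase.2 ⟨hac, ha⟩) ht ht'
  | cons hadj q ih =>
    obtain ⟨a', ha', b', hb', hau', hbu', t₁, ht₁a, ht₁b⟩ := h.exists_eUnion_eq_of_mem hadj.2
    obtain rfl : a' = a := hinj ha' ha (hau'.trans hau.symm)
    rw [SimpleGraph.Walk.support_cons, List.mem_cons, not_or] at hc
    have hb'c : b' ≠ c := by
      rintro rfl
      exact hc.2 (hbu' ▸ q.start_mem_support)
    exact (graphOf_reachable_of_mem (mem_erase.2 ⟨hac, ha⟩) ht ht₁a).trans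
      (ih hc.2 hb' hbu' hbw ht₁b hb'c)

end Proximity

namespace RunningIntersection

variable {V : Finset (Finset β)} {E E' : Finset (Sym2 (Finset β))} {A B u : Finset β} {x y : β}

theorem reachable_erase (hri : RunningIntersection V E) (hA : A ∈ V) (hu : u ∈ V) (hxA : x ∈ A)
    (hxB : x ∉ B) (hxu : x ∈ u) : (graphOf (E.erase s(A, B))).Reachable A u :=
  (hri x A hA u hu hxA hxu).mono <| graphOf_mono fun e he => by
    rw [mem_filter] at he
    refine mem_erase.2 ⟨?_, he.1⟩
    rintro rfl
    exact hxB (mem_inter.1 he.2).2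

theorem not_reachable_erase (hri : RunningIntersection V E) (hac : (graphOf E).IsAcyclic)
    (hAB : s(A, B) ∈ E) (hA : A ∈ V) (hu : u ∈ V) (hxA : x ∈ A) (hxB : x ∉ B) (hxu : x ∈ u) :
    ¬ (graphOf (E.erase s(A, B))).Reachable B u := fun hBu =>
  not_reachable_erase_of_isAcyclic hac (by rintro rfl; exact hxB hxA) hAB
    ((hri.reachable_erase hA hu hxA hxB hxu).trans hBu.symm)

theorem notMem_of_mem (hri : RunningIntersection V E) (hT : IsTreeOn V E) (hAB : s(A, B) ∈ E)
    (hxA : x ∈ A) (hxB : x ∉ B) (hyB : y ∈ B) (hyA : y ∉ A) (hu : u ∈ V) (hxu : x ∈ u) :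
    y ∉ u := fun hyu => by
  refine hri.not_reachable_erase hT.2.2.1 hAB (hT.left_mem hAB) hu hxA hxB hxu ?_
  rw [Sym2.eq_swap]
  exact hri.reachable_erase (hT.right_mem hAB) hu hyB hyA hyu

/-- If `x ∈ A \ B` and `y ∈ B \ A`, an edge `s(C, D) ≠ s(A, B)` with `x ∈ C` and `y ∈ D` would
close a cycle through `s(A, B)`, and a node containing both is excluded by `notMem_of_mem`. -/
theorem eq_of_mem_eUnion (hri : RunningIntersection V E) (hT : IsTreeOn V E) (hAB : s(A, B) ∈ E)
    (hxA : x ∈ A) (hxB : x ∉ B) (hyB : y ∈ B) (hyA : y ∉ A) {f : Sym2 (Finset β)} (hf : f ∈ E)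
    (hxf : x ∈ eUnion f) (hyf : y ∈ eUnion f) : f = s(A, B) := by
  by_contra hne
  have hsplit : ∀ {C D : Finset β}, s(C, D) = f → x ∈ C → y ∈ D → False := by
    rintro C D rfl hxC hyD
    have hBD : (graphOf (E.erase s(A, B))).Reachable B D := by
      rw [Sym2.eq_swap]
      exact hri.reachable_erase (hT.right_mem hAB) (hT.right_mem hf) hyB hyA hyD
    have hDC : (graphOf (E.erase s(A, B))).Reachable D C :=
      graphOf_reachable_of_mem (mem_erase.2 ⟨hne, hf⟩) (Sym2.mem_mk_right _ _)
        (Sym2.mem_mk_left _ _)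
    exact hri.not_reachable_erase hT.2.2.1 hAB (hT.left_mem hAB) (hT.left_mem hf) hxA hxB hxC
      (hBD.trans hDC)
  induction f with
  | _ C D =>
    have hC := hT.left_mem hf
    have hD := hT.right_mem hf
    rcases mem_union.1 hxf with hxC | hxD <;> rcases mem_union.1 hyf with hyC | hyD
    · exact hri.notMem_of_mem hT hAB hxA hxB hyB hyA hC hxC hyC
    · exact hsplit rfl hxC hyD
    · exact hsplit Sym2.eq_swap hxD hyC
    · exact hri.notMem_of_mem hT hAB hxA hxB hyB hyA hD hxD hyD

/-- Write the first step as `v = eUnion c`, `v₁ = eUnion e₁` with `t ∈ c ∩ e₁`, so `x ∉ t`. Lifting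
the rest of the walk joins `t` to a node containing `x` without using `c`, and the subtree of `x`
then closes a cycle through `c`. -/
theorem notMem_of_walk (hri : RunningIntersection V E) (hT : IsTreeOn V E)
    (hinj : Set.InjOn eUnion (E : Set (Sym2 (Finset β)))) (hprox : Proximity E E')
    {v v₁ w : Finset β} (hvv₁ : s(v, v₁) ∈ E') (hxv : x ∈ v) (hxv₁ : x ∉ v₁)
    (q : (graphOf E').Walk v₁ w) (hq : v ∉ q.support) (hw : w ∈ E.image eUnion) : x ∉ w := by
  intro hxw
  obtain ⟨c, hc, e₁, he₁, rfl, rfl, t, htc, hte₁⟩ := hprox.exists_eUnion_eq_of_mem hvv₁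
  obtain ⟨s₀, rfl⟩ := Sym2.mem_iff_exists.1 htc
  have hxt : x ∉ t := fun h => hxv₁ (subset_eUnion_of_mem hte₁ h)
  have hxs₀ : x ∈ s₀ := (mem_union.1 hxv).resolve_left hxt
  obtain ⟨ew, hew, rfl⟩ := mem_image.1 hw
  obtain ⟨s', hs'ew, hxs'⟩ := exists_mem_of_mem_eUnion hxw
  have hlift := hprox.reachable_erase_of_walk hinj q hq he₁ rfl hew rfl hte₁ hs'ew
  rw [Sym2.eq_swap] at hc hlift
  exact hri.not_reachable_erase hT.2.2.1 hc (hT.left_mem hc)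
    (hT.1 _ hew _ hs'ew) hxs₀ hxt hxs' hlift

theorem succ (hri : RunningIntersection V E) (hT : IsTreeOn V E)
    (hinj : Set.InjOn eUnion (E : Set (Sym2 (Finset β)))) (hprox : Proximity E E')
    (hT' : IsTreeOn (E.image eUnion) E') : RunningIntersection (E.image eUnion) E' := by
  intro x v hv w hw hxv hxw
  suffices key : ∀ {v} (p : (graphOf E').Walk v w), p.IsPath → x ∈ v →
      (graphOf (E'.filter fun e => x ∈ condSet e)).Reachable v w by
    obtain ⟨p⟩ := hT'.2.2.2 v hv w hw
    exact key p.bypass p.bypass_isPath hxv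
  intro v p hp hxv
  induction p with
  | nil => rfl
  | @cons v v₁ w hadj q ih =>
    rw [SimpleGraph.Walk.cons_isPath_iff] at hp
    have hx₁ : x ∈ v₁ := by
      by_contra hx₁
      exact hri.notMem_of_walk hT hinj hprox hadj.2 hxv hx₁ q hp.2 hw hxw
    have hedge : s(v, v₁) ∈ E'.filter fun e => x ∈ condSet e :=
      mem_filter.2 ⟨hadj.2, mem_inter.2 ⟨hxv, hx₁⟩⟩
    exact (graphOf_reachable_of_mem hedge (Sym2.mem_mk_left _ _) (Sym2.mem_mk_right _ _)).trans
      (ih hw hxw hp.1 hx₁)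

end RunningIntersection

structure IsVineTree (k : ℕ) (V : Finset (Finset β)) (E : Finset (Sym2 (Finset β))) : Prop where
  isTreeOn : IsTreeOn V E
  card_of_mem : ∀ v ∈ V, v.card = k
  card_eUnion : ∀ e ∈ E, (eUnion e).card = k + 1
  runningIntersection : RunningIntersection V E

namespace IsVineTree

variable {k : ℕ} {V : Finset (Finset β)} {E : Finset (Sym2 (Finset β))}

theorem exists_symmDiff_eq (h : IsVineTree k V E) {A B : Finset β} (hAB : s(A, B) ∈ E) :
    ∃ x y, x ∈ A ∧ x ∉ B ∧ y ∈ B ∧ y ∉ A ∧ symmDiff A B = {x, y} := by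
  have hA := h.card_of_mem A (h.isTreeOn.left_mem hAB)
  have hB := h.card_of_mem B (h.isTreeOn.right_mem hAB)
  have hU : (A ∪ B).card = k + 1 := h.card_eUnion _ hAB
  obtain ⟨x, hx⟩ := exists_sdiff_eq_singleton (A := A) (B := B) (by rw [hU, hB])
  obtain ⟨y, hy⟩ := exists_sdiff_eq_singleton (A := B) (B := A) (by rw [union_comm, hU, hA])
  obtain ⟨hxA, hxB⟩ := mem_sdiff.1 (hx ▸ mem_singleton_self x)
  obtain ⟨hyB, hyA⟩ := mem_sdiff.1 (hy ▸ mem_singleton_self y)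
  exact ⟨x, y, hxA, hxB, hyB, hyA, by rw [symmDiff_def, sup_eq_union, hx, hy, insert_eq]⟩

theorem injOn_eUnion (h : IsVineTree k V E) : Set.InjOn eUnion (E : Set (Sym2 (Finset β))) := by
  intro e he f hf hef
  induction e with
  | _ A B =>
    obtain ⟨x, y, hxA, hxB, hyB, hyA, -⟩ := h.exists_symmDiff_eq he
    exact (h.runningIntersection.eq_of_mem_eUnion h.isTreeOn he hxA hxB hyB hyA hf
      (hef ▸ mem_union_left _ hxA) (hef ▸ mem_union_right _ hyB)).symm

theorem succ (h : IsVineTree k V E) {V' : Finset (Finset β)} {E' : Finset (Sym2 (Finset β))}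
    (hV' : V' = E.image eUnion) (hT' : IsTreeOn V' E') (hprox : Proximity E E') :
    IsVineTree (k + 1) V' E' := by
  subst hV'
  refine ⟨hT', ?_, fun p hp => ?_,
    h.runningIntersection.succ h.isTreeOn h.injOn_eUnion hprox hT'⟩
  · exact forall_mem_image.2 fun e he => h.card_eUnion e he
  · obtain ⟨a, ha, b, hb, rfl, t, hta, htb⟩ := hprox p hp
    have ht := h.card_of_mem t (h.isTreeOn.1 _ ha _ hta)
    have hne : eUnion a ≠ eUnion b := fun hab => hT'.2.1 _ hp (hab ▸ Sym2.mk_isDiag_iff.2 rfl)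
    rw [eUnion_mk, card_union_eq_card_add_two (subset_eUnion_of_mem hta)
      (subset_eUnion_of_mem htb) (by rw [h.card_eUnion a ha, ht]) (by rw [h.card_eUnion b hb, ht])
      hne, ht]

end IsVineTree

end

@[simp] theorem condPair_mk (A B : Finset α) : condPair s(A, B) = symmDiff A B := rfl

theorem condPair_subset_eUnion (e : Sym2 (Finset α)) : condPair e ⊆ eUnion e := by
  induction e with
  | _ A B =>
    intro z hz
    rw [condPair_mk, mem_symmDiff] at hz
    rw [eUnion_mk, mem_union]
    tauto

namespace IsVineTree

variable {k : ℕ} {V : Finset (Finset α)} {E : Finset (Sym2 (Finset α))}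

theorem card_condPair (h : IsVineTree k V E) {e : Sym2 (Finset α)} (he : e ∈ E) :
    (condPair e).card = 2 := by
  induction e with
  | _ A B =>
    obtain ⟨x, y, hxA, -, -, hyA, hxy⟩ := h.exists_symmDiff_eq he
    rw [condPair_mk, hxy, card_pair (ne_of_mem_of_not_mem hxA hyA)]

theorem not_condPair_subset (h : IsVineTree k V E) {e : Sym2 (Finset α)} (he : e ∈ E)
    {u : Finset α} (hu : u ∈ V) : ¬ condPair e ⊆ u := by
  induction e with
  | _ A B =>
    obtain ⟨x, y, hxA, hxB, hyB, hyA, hxy⟩ := h.exists_symmDiff_eq he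
    rw [condPair_mk, hxy, insert_subset_iff, singleton_subset_iff]
    exact fun ⟨hxu, hyu⟩ =>
      h.runningIntersection.notMem_of_mem h.isTreeOn he hxA hxB hyB hyA hu hxu hyu

theorem injOn_condPair (h : IsVineTree k V E) : Set.InjOn condPair (E : Set (Sym2 (Finset α))) := by
  intro e he f hf hef
  induction e with
  | _ A B =>
    obtain ⟨x, y, hxA, hxB, hyB, hyA, hxy⟩ := h.exists_symmDiff_eq he
    have hsub : ({x, y} : Finset α) ⊆ eUnion f := by
      rw [← hxy, ← condPair_mk, hef]
      exact condPair_subset_eUnion f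
    exact (h.runningIntersection.eq_of_mem_eUnion h.isTreeOn he hxA hxB hyB hyA hf
      (hsub (mem_insert_self _ _))
      (hsub (mem_insert_of_mem (mem_singleton_self _)))).symm

end IsVineTree

namespace RegularVine

variable (𝒱 : RegularVine α)

theorem isVineTree {k : ℕ} (hk : 1 ≤ k) (hkd : k + 1 ≤ Fintype.card α) :
    IsVineTree k (𝒱.V k) (𝒱.E k) := by
  induction k, hk using Nat.le_induction with
  | base =>
    have hT := 𝒱.tree 1 le_rfl hkd
    have hsingleton : ∀ v ∈ 𝒱.V 1, ∃ a, v = {a} := by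
      intro v hv
      rw [𝒱.hV1] at hv
      obtain ⟨a, -, rfl⟩ := mem_image.1 hv
      exact ⟨a, rfl⟩
    refine ⟨hT, fun v hv => ?_, fun e he => ?_, fun x v hv w hw hxv hxw => ?_⟩
    · obtain ⟨a, rfl⟩ := hsingleton v hv
      exact card_singleton a
    · induction e with
      | _ A B =>
        obtain ⟨a, rfl⟩ := hsingleton A (hT.left_mem he)
        obtain ⟨b, rfl⟩ := hsingleton B (hT.right_mem he)
        have hab : a ≠ b := by
          rintro rfl
          exact hT.2.1 _ he (Sym2.mk_isDiag_iff.2 rfl)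
        rw [eUnion_mk, ← insert_eq, card_pair hab]
    · obtain ⟨a, rfl⟩ := hsingleton v hv
      obtain ⟨b, rfl⟩ := hsingleton w hw
      rw [mem_singleton] at hxv hxw
      rw [← hxv, ← hxw]
  | succ k hk ih =>
    exact (ih (by omega)).succ (𝒱.hVsucc k hk) (𝒱.tree (k + 1) (by omega) hkd) (𝒱.proximity k hk)

theorem card_E_add_eq {k : ℕ} (hk : 1 ≤ k) (hkd : k + 1 ≤ Fintype.card α) :
    (𝒱.E k).card + k = Fintype.card α := by
  induction k, hk using Nat.le_induction with
  | base =>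
    have hV1 : (𝒱.V 1).card = Fintype.card α := by
      rw [𝒱.hV1, card_image_of_injective _ singleton_injective, card_univ]
    have := (𝒱.tree 1 le_rfl hkd).card_add_one (card_pos.1 (by omega))
    omega
  | succ k hk ih =>
    have hV : (𝒱.V (k + 1)).card = (𝒱.E k).card := by
      rw [𝒱.hVsucc k hk, card_image_of_injOn (𝒱.isVineTree hk (by omega)).injOn_eUnion]
    have := (𝒱.tree (k + 1) (by omega) hkd).card_add_one (card_pos.1 (by omega))
    have := ih (by omega)
    omega

theorem exists_superset_mem_V {k m : ℕ} (hk : 1 ≤ k) (hkm : k ≤ m)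
    (hm : m + 1 ≤ Fintype.card α) {u : Finset α} (hu : u ∈ 𝒱.V k) : ∃ w ∈ 𝒱.V m, u ⊆ w := by
  induction m, hkm using Nat.le_induction with
  | base => exact ⟨u, hu, subset_rfl⟩
  | succ m hkm ih =>
    obtain ⟨w, hw, huw⟩ := ih (by omega)
    have hT := 𝒱.tree m (by omega) (by omega)
    have hV := hT.card_add_one ⟨w, hw⟩
    have hE := 𝒱.card_E_add_eq (k := m) (by omega) (by omega)
    obtain ⟨e, he, hwe⟩ := hT.exists_mem_of_one_lt_card (by omega) hw
    exact ⟨eUnion e, 𝒱.hVsucc m (by omega) ▸ mem_image_of_mem _ he,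
      huw.trans (subset_eUnion_of_mem hwe)⟩

/-- The conditioned pair of an edge of tree `k` lies in a node of every later tree, where no
conditioned pair can. -/
theorem condPair_ne_of_lt {k m : ℕ} (hk : 1 ≤ k) (hkm : k < m) (hm : m + 1 ≤ Fintype.card α)
    {e f : Sym2 (Finset α)} (he : e ∈ 𝒱.E k) (hf : f ∈ 𝒱.E m) : condPair e ≠ condPair f := by
  intro hef
  obtain ⟨w, hw, hsub⟩ := 𝒱.exists_superset_mem_V (by omega) hkm hm
    (𝒱.hVsucc k hk ▸ mem_image_of_mem eUnion he)
  exact (𝒱.isVineTree (by omega) hm).not_condPair_subset hf hw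
    (hef ▸ (condPair_subset_eUnion e).trans hsub)

def edges : Finset (ℕ × Sym2 (Finset α)) :=
  (Icc 1 (Fintype.card α - 1) ×ˢ univ).filter fun ke => ke.2 ∈ 𝒱.E ke.1

theorem mem_edges {ke : ℕ × Sym2 (Finset α)} :
    ke ∈ 𝒱.edges ↔ ke.1 ∈ Icc 1 (Fintype.card α - 1) ∧ ke.2 ∈ 𝒱.E ke.1 := by
  simp [edges]

theorem sum_card_E :
    ∑ k ∈ Icc 1 (Fintype.card α - 1), (𝒱.E k).card =
      Fintype.card α * (Fintype.card α - 1) / 2 := by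
  rw [← sum_Icc_one_sub]
  refine sum_congr rfl fun k hk => ?_
  have hk := mem_Icc.1 hk
  have := 𝒱.card_E_add_eq hk.1 (by omega)
  omega

theorem card_edges : 𝒱.edges.card = Fintype.card α * (Fintype.card α - 1) / 2 := by
  rw [← 𝒱.sum_card_E, edges, card_filter, sum_product]
  simp

theorem injOn_condPair_edges :
    Set.InjOn (fun ke : ℕ × Sym2 (Finset α) => condPair ke.2) 𝒱.edges := by
  rintro ⟨k, e⟩ hke ⟨m, f⟩ hmf (hef : condPair e = condPair f)
  obtain ⟨hk, he⟩ := 𝒱.mem_edges.1 hke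
  obtain ⟨hm, hf⟩ := 𝒱.mem_edges.1 hmf
  rw [mem_Icc] at hk hm
  rcases lt_trichotomy k m with hkm | rfl | hmk
  · exact absurd hef (𝒱.condPair_ne_of_lt hk.1 hkm (by omega) he hf)
  · exact congrArg (Prod.mk k) ((𝒱.isVineTree hk.1 (by omega)).injOn_condPair he hf hef)
  · exact absurd hef.symm (𝒱.condPair_ne_of_lt hm.1 hmk (by omega) hf he)

theorem existsUnique_condPair {P : Finset α} (hP : P.card = 2) :
    ∃! ke : ℕ × Sym2 (Finset α),
      ke.1 ∈ Icc 1 (Fintype.card α - 1) ∧ ke.2 ∈ 𝒱.E ke.1 ∧ condPair ke.2 = P := by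
  have hmaps : Set.MapsTo (fun ke : ℕ × Sym2 (Finset α) => condPair ke.2) 𝒱.edges
      (powersetCard 2 (univ : Finset α)) := fun ke hke => by
    obtain ⟨hk, he⟩ := 𝒱.mem_edges.1 hke
    have hk := mem_Icc.1 hk
    exact mem_powersetCard.2 ⟨subset_univ _,
      (𝒱.isVineTree hk.1 (by omega)).card_condPair he⟩
  have hcard : (powersetCard 2 (univ : Finset α)).card ≤ 𝒱.edges.card := by
    rw [card_powersetCard, card_univ, Nat.choose_two_right, card_edges]
  simpa only [mem_edges, and_assoc] using existsUnique_of_injOn_of_card_le hmaps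
    𝒱.injOn_condPair_edges hcard (mem_powersetCard.2 ⟨subset_univ P, hP⟩)

end RegularVine

/-- In a regular vine on `d` elements, the total number of edges over all trees is
`d(d-1)/2`, and the map `e ↦ {a_e, b_e}` sending an edge to its conditioned pair is
a bijection onto the unordered pairs of elements of `V₁`: every pair of size 2 is
the conditioned set of exactly one edge of the vine. -/
theorem vine_condPair_bijective {d : ℕ} (𝒱 : RegularVine (Fin d)) :
    (∑ k ∈ Finset.Icc 1 (d - 1), (𝒱.E k).card) = d * (d - 1) / 2 ∧
    ∀ P : Finset (Fin d), P.card = 2 →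
      ∃! ke : ℕ × Sym2 (Finset (Fin d)),
        ke.1 ∈ Finset.Icc 1 (d - 1) ∧ ke.2 ∈ 𝒱.E ke.1 ∧ condPair ke.2 = P := by
  have hsum := 𝒱.sum_card_E
  have hunique := fun P : Finset (Fin d) => 𝒱.existsUnique_condPair (P := P)
  simp only [Fintype.card_fin] at hsum hunique
  exact ⟨hsum, hunique⟩
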